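/- arXiv:2101.04891 — 2 statements merged into one kernel-verified Lean document; each statement's English description precedes it below -/
import Mathlib

section
/- Let R be a ring and let C1, C2, C12 be chain complexes of R-modules indexed by ℤ. Let φ : C1 ⊕ C2 → C1 ⊕ C2 ⊕ C12 be the chain map given in each degree by φ(x, y) = (x, −y, 0). Let F = (mappingCone φ)⟦−1⟧ be the homotopy fiber of φ, with F_n = (C1 ⊕ C2)_n ⊕ (C1 ⊕ C2 ⊕ C12)_{n+1}, and let p : F → C1 ⊕ C2 be the canonical chain map given in each degree by (a, b) ↦ a. Then the composite chain maps pr_{C1} ∘ p : F → C1 and pr_{C2} ∘ p : F → C2 are each chain homotopic to zero. -/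
/-!
The second component `b` of a point `(a, b)` of the fiber is a null-homotopy of `p ≫ φ`: the
fiber differential has second component `φ a - d b`. Hence `p ≫ q` is null-homotopic for every
`q` factoring through `φ`, and both projections do: `pr₁ = φ ≫ pr₁ ≫ pr₁` and
`pr₂ = φ ≫ (-(pr₁ ≫ pr₂))`.
-/

open CategoryTheory Limits HomologicalComplex

universe u

/-- The chain map `φ : C1 ⊞ C2 ⟶ (C1 ⊞ C2) ⊞ C12` given in each degree by
`φ (x, y) = (x, -y, 0)`. -/
noncomputable def stmtPhi (R : Type u) [Ring R] (C1 C2 C12 : ChainComplex (ModuleCat.{u} R) ℤ) :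
    C1 ⊞ C2 ⟶ (C1 ⊞ C2) ⊞ C12 :=
  biprod.fst ≫ biprod.inl ≫ biprod.inl - biprod.snd ≫ biprod.inr ≫ biprod.inl

/-- The homotopy fiber `F = (mappingCone φ)⟦-1⟧` of `φ` : the chain complex with
`F_n = (C1 ⊞ C2)_n ⊞ ((C1 ⊞ C2) ⊞ C12)_{n+1}` and the usual twisted differential
`d (a, b) = (d a, φ a - d b)`. -/
noncomputable def stmtFiber (R : Type u) [Ring R] (C1 C2 C12 : ChainComplex (ModuleCat.{u} R) ℤ) :
    ChainComplex (ModuleCat.{u} R) ℤ :=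
  ChainComplex.of
    (fun n => (C1 ⊞ C2).X n ⊞ ((C1 ⊞ C2) ⊞ C12).X (n + 1))
    (fun n => biprod.lift
      (biprod.fst ≫ (C1 ⊞ C2).d (n + 1) n)
      (biprod.fst ≫ (stmtPhi R C1 C2 C12).f (n + 1) -
        biprod.snd ≫ ((C1 ⊞ C2) ⊞ C12).d (n + 1 + 1) (n + 1)))
    (fun n => by
      apply biprod.hom_ext
      · simp
      · simp only [Preadditive.comp_sub, Preadditive.sub_comp, Category.assoc,
          biprod.lift_fst_assoc, biprod.lift_snd_assoc, biprod.lift_snd,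
          HomologicalComplex.d_comp_d, HomologicalComplex.d_comp_d_assoc, comp_zero, zero_comp,
          Limits.zero_comp, sub_zero, zero_sub, Preadditive.neg_comp, Preadditive.comp_neg]
        rw [HomologicalComplex.Hom.comm, sub_self])

/-- The canonical projection `p : F ⟶ C1 ⊞ C2`, given in each degree by `(a, b) ↦ a`. -/
noncomputable def stmtP (R : Type u) [Ring R] (C1 C2 C12 : ChainComplex (ModuleCat.{u} R) ℤ) :
    stmtFiber R C1 C2 C12 ⟶ C1 ⊞ C2 where
  f n := (biprod.fst : (C1 ⊞ C2).X n ⊞ ((C1 ⊞ C2) ⊞ C12).X (n + 1) ⟶ (C1 ⊞ C2).X n)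
  comm' i j hij := by
    obtain rfl : j + 1 = i := hij
    simp [stmtFiber, ChainComplex.of_d]

section

variable (R : Type u) [Ring R] (C1 C2 C12 : ChainComplex (ModuleCat.{u} R) ℤ)

/-- `biprod.snd`, but with source `stmtFiber … n` rather than the biproduct it unfolds to, so
that rewriting with the fiber differential produces type-correct terms. -/
noncomputable def stmtFiberSnd (n : ℤ) :
    (stmtFiber R C1 C2 C12).X n ⟶ ((C1 ⊞ C2) ⊞ C12).X (n + 1) :=
  biprod.snd

lemma stmtFiber_d_comp_stmtFiberSnd (n : ℤ) :
    (stmtFiber R C1 C2 C12).d (n + 1) n ≫ stmtFiberSnd R C1 C2 C12 n =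
      (stmtP R C1 C2 C12 ≫ stmtPhi R C1 C2 C12).f (n + 1) -
        stmtFiberSnd R C1 C2 C12 (n + 1) ≫ ((C1 ⊞ C2) ⊞ C12).d (n + 1 + 1) (n + 1) := by
  simp only [stmtFiber, ChainComplex.of_d, stmtFiberSnd, biprod.lift_snd]
  rfl

noncomputable def stmtPCompStmtPhiHomotopy :
    Homotopy (stmtP R C1 C2 C12 ≫ stmtPhi R C1 C2 C12) 0 :=
  (Homotopy.ofEq (by
    ext n : 1
    obtain ⟨m, rfl⟩ : ∃ m, n = m + 1 := ⟨n - 1, by ring⟩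
    rw [Homotopy.nullHomotopicMap'_f (k₂ := m + 1 + 1) rfl rfl, XIsoOfEq_rfl, XIsoOfEq_rfl]
    simp only [Iso.refl_hom, Category.comp_id, stmtFiber_d_comp_stmtFiberSnd, sub_add_cancel])).trans
  (Homotopy.nullHomotopy' fun i j (h : (ComplexShape.down ℤ).Rel j i) =>
    stmtFiberSnd R C1 C2 C12 i ≫ (XIsoOfEq _ h).hom)

noncomputable def stmtPCompHomotopyOfFactorsThroughStmtPhi {D : ChainComplex (ModuleCat.{u} R) ℤ}
    (r : (C1 ⊞ C2) ⊞ C12 ⟶ D) {q : C1 ⊞ C2 ⟶ D} (hq : stmtPhi R C1 C2 C12 ≫ r = q) :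
    Homotopy (stmtP R C1 C2 C12 ≫ q) 0 :=
  (Homotopy.ofEq (by rw [← hq, Category.assoc])).trans
    (((stmtPCompStmtPhiHomotopy R C1 C2 C12).compRight r).trans (Homotopy.ofEq zero_comp))

end

/-- the composites of the canonical projection `p : F ⟶ C1 ⊞ C2` from the
homotopy fiber of `φ` with the two projections `C1 ⊞ C2 ⟶ C1` and `C1 ⊞ C2 ⟶ C2` are
each chain homotopic to zero. -/
theorem stmt_2 (R : Type u) [Ring R] (C1 C2 C12 : ChainComplex (ModuleCat.{u} R) ℤ) :
    Nonempty (Homotopy (stmtP R C1 C2 C12 ≫ (biprod.fst : C1 ⊞ C2 ⟶ C1)) 0) ∧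
    Nonempty (Homotopy (stmtP R C1 C2 C12 ≫ (biprod.snd : C1 ⊞ C2 ⟶ C2)) 0) :=
  ⟨⟨stmtPCompHomotopyOfFactorsThroughStmtPhi R C1 C2 C12 (biprod.fst ≫ biprod.fst)
      (by simp [stmtPhi])⟩,
    ⟨stmtPCompHomotopyOfFactorsThroughStmtPhi R C1 C2 C12 (-(biprod.fst ≫ biprod.snd))
      (by simp [stmtPhi])⟩⟩
end

section
/- Let R be a commutative ring and σ a type indexing variables. Let L = AddMonoidAlgebra R (σ →₀ ℤ) be the monoid algebra over R on the additive monoid of finitely supported functions σ → ℤ; for such f write X^f ∈ L for the corresponding monomial (basis element). For a finite subset U ⊆ σ, let B_U ⊆ L denote the R-submodule spanned by the monomials X^f with f j ≥ 0 for all j ∉ U. Let T ⊆ σ be a finite subset. Then: (1) for every S ⊆ T the inclusion of R-modules B_S ⊆ B_T admits an R-linear retraction (it is a split injection); and (2) for all nonempty disjoint subsets S, S' ⊆ T, the images of B_S and B_{S'} under the quotient map B_T → B_T / B_∅ intersect in {0}. -/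
/-!
`B_U` is the submodule of elements supported on the exponent set
`E_U = {f | ∀ j ∉ U, 0 ≤ f j}`. A submodule supported on a set has the submodule supported on
the complementary set as a complement, so its projection along that complement retracts every
inclusion `B_S ≤ B_T`. For disjoint `S, S'` we have `E_S ∩ E_{S'} = E_∅`, so
`B_S ⊓ B_{S'} = B_∅ ≤ B_{S'}`, and the modular law makes the images of `B_S` and `B_{S'}` in the
quotient by `B_∅` meet trivially.
-/

open AddMonoidAlgebra

def monoSet (R : Type) [CommRing R] (σ : Type) (U : Finset σ) :
    Set (AddMonoidAlgebra R (σ →₀ ℤ)) :=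
  {x | ∃ f : σ →₀ ℤ, (∀ j ∉ U, 0 ≤ f j) ∧ x = AddMonoidAlgebra.single f 1}

noncomputable def BM (R : Type) [CommRing R] (σ : Type) (U : Finset σ) :
    Submodule R (AddMonoidAlgebra R (σ →₀ ℤ)) :=
  Submodule.span R (monoSet R σ U)

theorem BM_mono (R : Type) [CommRing R] (σ : Type) {S T : Finset σ} (hST : S ⊆ T) :
    BM R σ S ≤ BM R σ T := by
  apply Submodule.span_mono
  rintro x ⟨f, hf, rfl⟩
  exact ⟨f, fun j hj => hf j (fun hS => hj (hST hS)), rfl⟩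

namespace Submodule

variable {R M : Type*} [Ring R] [AddCommGroup M] [Module R M]

theorem exists_retraction_inclusion_of_isCompl {p p' q : Submodule R M} (hpq : p ≤ q)
    (h : IsCompl p p') : ∃ r : q →ₗ[R] p, r ∘ₗ inclusion hpq = LinearMap.id :=
  ⟨p.projectionOnto p' h ∘ₗ q.subtype, LinearMap.ext (projectionOnto_apply_left h)⟩

theorem map_mkQ_inf_map_mkQ_eq_bot {a b c : Submodule R M} (hcb : c ≤ b) (hab : a ⊓ b ≤ c) :
    a.map c.mkQ ⊓ b.map c.mkQ = ⊥ := by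
  apply comap_injective_of_surjective c.mkQ_surjective
  rw [comap_inf, comap_map_mkQ, comap_map_mkQ, comap_bot, ker_mkQ, sup_eq_right.2 hcb,
    sup_inf_assoc_of_le _ hcb, sup_eq_left.2 hab]

end Submodule

namespace AddMonoidAlgebra

variable {R S M : Type*} [Semiring R] [Semiring S] [Module R S]

theorem isCompl_supported_compl (s : Set M) :
    IsCompl (supported R S s) (supported R S sᶜ) :=
  (Submodule.orderIsoMapComap (coeffLinearEquiv R)).symm.isCompl_iff.1
    ⟨Finsupp.disjoint_supported_supported isCompl_compl.disjoint,
      Finsupp.codisjoint_supported_supported isCompl_compl.codisjoint⟩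

theorem supported_inf_supported (s t : Set M) :
    supported R S s ⊓ supported R S t = supported R S (s ∩ t) := by
  simp only [supported, ← Submodule.comap_inf, Finsupp.supported_inter]

end AddMonoidAlgebra

section BM

variable (R : Type) [CommRing R] (σ : Type)

theorem BM_eq_supported (U : Finset σ) :
    BM R σ U = supported R R {f : σ →₀ ℤ | ∀ j ∉ U, 0 ≤ f j} := by
  rw [supported_eq_span_single, BM]
  congr 1
  ext x
  simp [monoSet, eq_comm]

theorem isCompl_BM (U : Finset σ) :
    IsCompl (BM R σ U) (supported R R {f : σ →₀ ℤ | ∀ j ∉ U, 0 ≤ f j}ᶜ) := by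
  rw [BM_eq_supported]
  exact isCompl_supported_compl _

theorem BM_inf_BM [DecidableEq σ] (S S' : Finset σ) :
    BM R σ S ⊓ BM R σ S' = BM R σ (S ∩ S') := by
  simp only [BM_eq_supported, supported_inf_supported]
  congr 1
  ext f
  simp only [Set.mem_inter_iff, Set.mem_ofPred_eq, Finset.mem_inter, not_and_or]
  exact ⟨fun ⟨hS, hS'⟩ j hj => hj.elim (hS j) (hS' j),
    fun h => ⟨fun j hj => h j (.inl hj), fun j hj => h j (.inr hj)⟩⟩

end BM

/-- (1) for `S ⊆ T`, the inclusion of `R`-modules `B_S ⊆ B_T` admits an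
`R`-linear retraction; (2) for nonempty disjoint `S, S' ⊆ T`, the images of `B_S` and
`B_{S'}` under the quotient map `B_T → B_T / B_∅` intersect in `{0}`. -/
theorem stmt_8 (R : Type) [CommRing R] (σ : Type) (T : Finset σ) :
    (∀ (S : Finset σ) (hST : S ⊆ T),
      ∃ r : BM R σ T →ₗ[R] BM R σ S,
        r ∘ₗ Submodule.inclusion (BM_mono R σ hST) = LinearMap.id) ∧
    (∀ S S' : Finset σ, S ⊆ T → S' ⊆ T → S.Nonempty → S'.Nonempty → Disjoint S S' →
      (((BM R σ S).comap (BM R σ T).subtype).map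
          ((BM R σ ∅).comap (BM R σ T).subtype).mkQ) ⊓
      (((BM R σ S').comap (BM R σ T).subtype).map
          ((BM R σ ∅).comap (BM R σ T).subtype).mkQ) = ⊥) := by
  classical
  refine ⟨fun S hST => ?_, fun S S' _ _ _ _ hdisj => ?_⟩
  · exact Submodule.exists_retraction_inclusion_of_isCompl _ (isCompl_BM R σ S)
  · have hinf : BM R σ S ⊓ BM R σ S' = BM R σ ∅ := by
      rw [BM_inf_BM, Finset.disjoint_iff_inter_eq_empty.1 hdisj]
    refine Submodule.map_mkQ_inf_map_mkQ_eq_bot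
      (Submodule.comap_mono (BM_mono R σ (Finset.empty_subset S'))) ?_
    rw [← Submodule.comap_inf, hinf]
end
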